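/- Let M ∈ ℝ^{m×n} and consider the gradient flow X' = −2(XYᵀ−M)Y, Y' = −2(XYᵀ−M)ᵀX on [0,T). Then for all t ∈ [0,T), ‖X(t)‖₂⁴ + ‖Y(t)‖₂⁴ ≤ ‖X(0)ᵀX(0) − Y(0)ᵀY(0)‖² + 2(‖X(0)Y(0)ᵀ − M‖ + ‖M‖)². In particular, X and Y are bounded. -/

import Mathlib

open Matrix

/-! ### Auxiliary lemmas about the spectral (ℓ²-operator) norm -/

section SpecAux
open scoped Matrix.Norms.L2Operator

lemma specAux_mul {m n : ℕ} (A : Matrix (Fin m) (Fin n) ℝ) :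
    ‖LinearMap.toContinuousLinearMap (Matrix.toEuclideanLin (Aᵀ * A))‖ =
      ‖LinearMap.toContinuousLinearMap (Matrix.toEuclideanLin A)‖ *
        ‖LinearMap.toContinuousLinearMap (Matrix.toEuclideanLin A)‖ := by
  have h := Matrix.l2_opNorm_conjTranspose_mul_self A
  rw [Matrix.conjTranspose_eq_transpose_of_trivial] at h
  exact h

lemma specAux_le {m n : ℕ} (A : Matrix (Fin m) (Fin n) ℝ) :
    ‖LinearMap.toContinuousLinearMap (Matrix.toEuclideanLin A)‖ ≤
      Real.sqrt (∑ i, ∑ j, A i j ^ 2) := by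
  apply ContinuousLinearMap.opNorm_le_bound _ (Real.sqrt_nonneg _)
  intro x
  have hx : ‖x‖ = Real.sqrt (∑ j, x j ^ 2) := by
    rw [EuclideanSpace.norm_eq]
    congr 1
    exact Finset.sum_congr rfl fun j _ => sq_abs (x j)
  have happ : ∀ i, (LinearMap.toContinuousLinearMap (Matrix.toEuclideanLin A) x) i
      = ∑ j, A i j * x j := by
    intro i
    simp [Matrix.toEuclideanLin_apply, WithLp.equiv, Equiv.refl_apply]
    rfl
  have hnorm : ‖LinearMap.toContinuousLinearMap (Matrix.toEuclideanLin A) x‖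
      = Real.sqrt (∑ i, (∑ j, A i j * x j) ^ 2) := by
    rw [EuclideanSpace.norm_eq]
    congr 1
    refine Finset.sum_congr rfl fun i _ => ?_
    rw [happ i, Real.norm_eq_abs, sq_abs]
  rw [hnorm, hx, ← Real.sqrt_mul (by positivity)]
  apply Real.sqrt_le_sqrt
  rw [Finset.sum_mul]
  exact Finset.sum_le_sum fun i _ =>
    (Finset.sum_mul_sq_le_sq_mul_sq _ _ _).trans_eq rfl

end SpecAux

attribute [local instance] Matrix.frobeniusNormedAddCommGroup Matrix.frobeniusNormedSpace

/-- The spectral (operator) norm of a real matrix, i.e. the operator norm of the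
associated linear map between Euclidean spaces. -/
noncomputable def specNorm {m n : ℕ} (A : Matrix (Fin m) (Fin n) ℝ) : ℝ :=
  ‖LinearMap.toContinuousLinearMap (Matrix.toEuclideanLin A)‖

/-! ### Frobenius norm auxiliary lemmas -/

lemma frob_sq {m n : ℕ} (A : Matrix (Fin m) (Fin n) ℝ) :
    ‖A‖ ^ 2 = ∑ i, ∑ j, A i j ^ 2 := by
  rw [Matrix.frobenius_norm_def]
  rw [← Real.rpow_natCast _ 2, ← Real.rpow_mul (by positivity)]
  norm_num

lemma trace_transpose_mul_self {m n : ℕ} (A : Matrix (Fin m) (Fin n) ℝ) :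
    Matrix.trace (Aᵀ * A) = ‖A‖ ^ 2 := by
  rw [frob_sq, Matrix.trace]
  rw [Finset.sum_comm]
  refine Finset.sum_congr rfl fun i _ => ?_
  simp [Matrix.mul_apply, Matrix.diag, sq]

lemma specNorm_transpose_mul_self {m n : ℕ} (A : Matrix (Fin m) (Fin n) ℝ) :
    specNorm (Aᵀ * A) = specNorm A * specNorm A :=
  specAux_mul A

lemma specNorm_nonneg {m n : ℕ} (A : Matrix (Fin m) (Fin n) ℝ) : 0 ≤ specNorm A :=
  norm_nonneg _

lemma specNorm_le_frob {m n : ℕ} (A : Matrix (Fin m) (Fin n) ℝ) : specNorm A ≤ ‖A‖ := by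
  have h := specAux_le A
  have h2 : Real.sqrt (∑ i, ∑ j, A i j ^ 2) = ‖A‖ := by
    rw [← frob_sq, Real.sqrt_sq (norm_nonneg _)]
  rw [h2] at h
  exact h

/-! ### Calculus toolkit for matrix-valued curves -/

/-- Matrix multiplication as a continuous bilinear map (Frobenius norm). -/
noncomputable def mulCLM (a b c : ℕ) :
    Matrix (Fin a) (Fin b) ℝ →L[ℝ] Matrix (Fin b) (Fin c) ℝ →L[ℝ] Matrix (Fin a) (Fin c) ℝ :=
  LinearMap.mkContinuous₂
    (LinearMap.mk₂ ℝ (fun A B => A * B) Matrix.add_mul (fun r A B => Matrix.smul_mul r A B)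
      Matrix.mul_add (fun r A B => Matrix.mul_smul A r B)) 1
    (fun A B => by simpa using Matrix.frobenius_norm_mul A B)

@[simp] lemma mulCLM_apply {a b c : ℕ} (A : Matrix (Fin a) (Fin b) ℝ)
    (B : Matrix (Fin b) (Fin c) ℝ) : mulCLM a b c A B = A * B := rfl

lemma HasDerivWithinAt.matmul {a b c : ℕ} {f : ℝ → Matrix (Fin a) (Fin b) ℝ}
    {g : ℝ → Matrix (Fin b) (Fin c) ℝ} {f' g'} {s : Set ℝ} {t : ℝ}
    (hf : HasDerivWithinAt f f' s t) (hg : HasDerivWithinAt g g' s t) :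
    HasDerivWithinAt (fun u => f u * g u) (f' * g t + f t * g') s t := by
  exact ((mulCLM a b c).hasDerivWithinAt_of_bilinear hf hg).congr_deriv (add_comm _ _)

noncomputable def transCLM (a b : ℕ) :
    Matrix (Fin a) (Fin b) ℝ →L[ℝ] Matrix (Fin b) (Fin a) ℝ :=
  LinearMap.toContinuousLinearMap
    { toFun := fun A => Aᵀ
      map_add' := Matrix.transpose_add
      map_smul' := Matrix.transpose_smul }

@[simp] lemma transCLM_apply {a b : ℕ} (A : Matrix (Fin a) (Fin b) ℝ) : transCLM a b A = Aᵀ := rfl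

lemma HasDerivWithinAt.mtrans {a b : ℕ} {f : ℝ → Matrix (Fin a) (Fin b) ℝ} {f'} {s : Set ℝ}
    {t : ℝ} (hf : HasDerivWithinAt f f' s t) :
    HasDerivWithinAt (fun u => (f u)ᵀ) f'ᵀ s t :=
  (transCLM a b).hasFDerivAt.comp_hasDerivWithinAt t hf

noncomputable def traceCLM (a : ℕ) : Matrix (Fin a) (Fin a) ℝ →L[ℝ] ℝ :=
  LinearMap.toContinuousLinearMap (Matrix.traceLinearMap (Fin a) ℝ ℝ)

@[simp] lemma traceCLM_apply {a : ℕ} (A : Matrix (Fin a) (Fin a) ℝ) :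
    traceCLM a A = Matrix.trace A := rfl

lemma HasDerivWithinAt.mtrace {a : ℕ} {f : ℝ → Matrix (Fin a) (Fin a) ℝ} {f'} {s : Set ℝ}
    {t : ℝ} (hf : HasDerivWithinAt f f' s t) :
    HasDerivWithinAt (fun u => Matrix.trace (f u)) (Matrix.trace f') s t :=
  (traceCLM a).hasFDerivAt.comp_hasDerivWithinAt t hf

/-! ### Trace identities -/

lemma trace_aux {m n r : ℕ} (Xt : Matrix (Fin m) (Fin r) ℝ) (Yt : Matrix (Fin n) (Fin r) ℝ)
    (Et : Matrix (Fin m) (Fin n) ℝ) :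
    Matrix.trace (((-2:ℝ) • (Et * Yt) * Ytᵀ + Xt * ((-2:ℝ) • (Etᵀ * Xt))ᵀ)ᵀ * Et
      + Etᵀ * ((-2:ℝ) • (Et * Yt) * Ytᵀ + Xt * ((-2:ℝ) • (Etᵀ * Xt))ᵀ))
      = -4 * (‖Et * Yt‖ ^ 2 + ‖Xtᵀ * Et‖ ^ 2) := by
  have key : Matrix.trace (Etᵀ * ((-2:ℝ) • (Et * Yt) * Ytᵀ + Xt * ((-2:ℝ) • (Etᵀ * Xt))ᵀ))
      = -2 * (‖Et * Yt‖ ^ 2 + ‖Xtᵀ * Et‖ ^ 2) := by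
    have e1 : Etᵀ * ((-2:ℝ) • (Et * Yt) * Ytᵀ) = (-2:ℝ) • (Etᵀ * (Et * Yt) * Ytᵀ) := by
      simp [Matrix.smul_mul, Matrix.mul_smul, Matrix.mul_assoc]
    have e2 : Etᵀ * (Xt * ((-2:ℝ) • (Etᵀ * Xt))ᵀ) = (-2:ℝ) • ((Xtᵀ * Et)ᵀ * (Xtᵀ * Et)) := by
      simp [Matrix.transpose_smul, Matrix.transpose_mul, Matrix.mul_smul, Matrix.mul_assoc]
    have e3 : Matrix.trace (Etᵀ * (Et * Yt) * Ytᵀ) = ‖Et * Yt‖ ^ 2 := by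
      rw [Matrix.trace_mul_comm, ← Matrix.mul_assoc, ← Matrix.transpose_mul,
        trace_transpose_mul_self]
    rw [Matrix.mul_add, Matrix.trace_add, e1, e2, Matrix.trace_smul, Matrix.trace_smul,
      trace_transpose_mul_self, e3]
    simp only [smul_eq_mul]
    ring
  have flip : Matrix.trace (((-2:ℝ) • (Et * Yt) * Ytᵀ + Xt * ((-2:ℝ) • (Etᵀ * Xt))ᵀ)ᵀ * Et)
      = Matrix.trace (Etᵀ * ((-2:ℝ) • (Et * Yt) * Ytᵀ + Xt * ((-2:ℝ) • (Etᵀ * Xt))ᵀ)) := by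
    rw [← Matrix.trace_transpose (Etᵀ * _), Matrix.transpose_mul, Matrix.transpose_transpose]
  rw [Matrix.trace_add, flip, key]
  ring

lemma norm_sq_identity {m n r : ℕ} (Xt : Matrix (Fin m) (Fin r) ℝ)
    (Yt : Matrix (Fin n) (Fin r) ℝ) :
    ‖Xtᵀ * Xt‖ ^ 2 + ‖Ytᵀ * Yt‖ ^ 2
      = ‖Xtᵀ * Xt - Ytᵀ * Yt‖ ^ 2 + 2 * ‖Xt * Ytᵀ‖ ^ 2 := by
  have hAB : Matrix.trace ((Xtᵀ * Xt) * (Ytᵀ * Yt)) = ‖Xt * Ytᵀ‖ ^ 2 := by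
    rw [← trace_transpose_mul_self (Xt * Ytᵀ), Matrix.transpose_mul, Matrix.transpose_transpose]
    rw [Matrix.trace_mul_comm (Yt * Xtᵀ) (Xt * Ytᵀ)]
    rw [Matrix.mul_assoc Xtᵀ Xt (Ytᵀ * Yt), Matrix.trace_mul_comm Xtᵀ (Xt * (Ytᵀ * Yt))]
    simp [Matrix.mul_assoc]
  have hBA : Matrix.trace ((Ytᵀ * Yt) * (Xtᵀ * Xt)) = Matrix.trace ((Xtᵀ * Xt) * (Ytᵀ * Yt)) :=
    Matrix.trace_mul_comm _ _
  have expand : ‖Xtᵀ * Xt - Ytᵀ * Yt‖ ^ 2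
      = ‖Xtᵀ * Xt‖ ^ 2 + ‖Ytᵀ * Yt‖ ^ 2 - 2 * Matrix.trace ((Xtᵀ * Xt) * (Ytᵀ * Yt)) := by
    rw [← trace_transpose_mul_self, ← trace_transpose_mul_self, ← trace_transpose_mul_self]
    rw [Matrix.transpose_sub, Matrix.sub_mul, Matrix.mul_sub, Matrix.mul_sub,
      Matrix.trace_sub, Matrix.trace_sub, Matrix.trace_sub]
    simp only [Matrix.transpose_mul, Matrix.transpose_transpose]
    rw [hBA]
    ring
  rw [expand, hAB]
  ring

lemma frob_pow4_le {a b : ℕ} (A : Matrix (Fin a) (Fin b) ℝ) :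
    ‖A‖ ^ 4 ≤ (b : ℝ) * ‖Aᵀ * A‖ ^ 2 := by
  have h1 : ‖A‖ ^ 4 = Matrix.trace (Aᵀ * A) ^ 2 := by rw [trace_transpose_mul_self]; ring
  have h3 : (∑ i, (Aᵀ * A) i i) ^ 2
      ≤ ((Finset.univ : Finset (Fin b)).card : ℝ) * ∑ i, ((Aᵀ * A) i i) ^ 2 :=
    sq_sum_le_card_mul_sum_sq
  have h4 : ∑ i, ((Aᵀ * A) i i) ^ 2 ≤ ‖Aᵀ * A‖ ^ 2 := by
    rw [frob_sq]
    exact Finset.sum_le_sum fun i _ =>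
      Finset.single_le_sum (f := fun j => ((Aᵀ * A) i j) ^ 2) (fun j _ => sq_nonneg _)
        (Finset.mem_univ i)
  have htr : Matrix.trace (Aᵀ * A) = ∑ i, (Aᵀ * A) i i := rfl
  rw [h1, htr]
  calc (∑ i, (Aᵀ * A) i i) ^ 2 ≤ (b : ℝ) * ∑ i, ((Aᵀ * A) i i) ^ 2 := by
        simpa using h3
    _ ≤ (b : ℝ) * ‖Aᵀ * A‖ ^ 2 := by
        exact mul_le_mul_of_nonneg_left h4 (by positivity)

theorem stmt5 {m n r : ℕ} (M : Matrix (Fin m) (Fin n) ℝ) (T : ℝ) (hT : 0 < T)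
    (X : ℝ → Matrix (Fin m) (Fin r) ℝ) (Y : ℝ → Matrix (Fin n) (Fin r) ℝ)
    (hX : ∀ t ∈ Set.Ico (0 : ℝ) T,
      HasDerivWithinAt X ((-2 : ℝ) • ((X t * (Y t)ᵀ - M) * Y t)) (Set.Ico (0 : ℝ) T) t)
    (hY : ∀ t ∈ Set.Ico (0 : ℝ) T,
      HasDerivWithinAt Y ((-2 : ℝ) • ((X t * (Y t)ᵀ - M)ᵀ * X t)) (Set.Ico (0 : ℝ) T) t) :
    (∀ t ∈ Set.Ico (0 : ℝ) T,
      specNorm (X t) ^ 4 + specNorm (Y t) ^ 4 ≤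
        ‖(X 0)ᵀ * X 0 - (Y 0)ᵀ * Y 0‖ ^ 2 + 2 * (‖X 0 * (Y 0)ᵀ - M‖ + ‖M‖) ^ 2) ∧
    ∃ c : ℝ, ∀ t ∈ Set.Ico (0 : ℝ) T, ‖X t‖ ≤ c ∧ ‖Y t‖ ≤ c := by
  have h0s : (0 : ℝ) ∈ Set.Ico (0 : ℝ) T := ⟨le_refl 0, hT⟩
  set E : ℝ → Matrix (Fin m) (Fin n) ℝ := fun u => X u * (Y u)ᵀ - M with hE
  -- derivative of E
  have hEd : ∀ t ∈ Set.Ico (0 : ℝ) T, HasDerivWithinAt E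
      ((-2 : ℝ) • (E t * Y t) * (Y t)ᵀ + X t * ((-2 : ℝ) • ((E t)ᵀ * X t))ᵀ)
      (Set.Ico (0 : ℝ) T) t := by
    intro t ht
    exact ((hX t ht).matmul (hY t ht).mtrans).sub_const M
  -- conservation of XᵀX - YᵀY
  have hDd : ∀ t ∈ Set.Ico (0 : ℝ) T,
      HasDerivWithinAt (fun u => (X u)ᵀ * X u - (Y u)ᵀ * Y u) 0 (Set.Ico (0 : ℝ) T) t := by
    intro t ht
    have h := ((hX t ht).mtrans.matmul (hX t ht)).sub ((hY t ht).mtrans.matmul (hY t ht))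
    refine h.congr_deriv ?_
    simp only [Matrix.transpose_smul, Matrix.transpose_mul, Matrix.smul_mul, Matrix.mul_smul,
      Matrix.transpose_transpose, Matrix.mul_assoc]
    abel
  have hDconst : ∀ t ∈ Set.Ico (0 : ℝ) T,
      (X t)ᵀ * X t - (Y t)ᵀ * Y t = (X 0)ᵀ * X 0 - (Y 0)ᵀ * Y 0 := by
    intro t ht
    exact (convex_Ico (0:ℝ) T).is_const_of_fderivWithin_eq_zero
      (fun u hu => (hDd u hu).differentiableWithinAt)
      (fun u hu => by
        have h := (hDd u hu).hasFDerivWithinAt.fderivWithin ((uniqueDiffOn_Ico 0 T) u hu)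
        refine h.trans ?_
        ext v
        simp
        rfl) ht h0s
  -- monotonicity of ‖E‖²
  have hgd : ∀ t ∈ Set.Ico (0 : ℝ) T, HasDerivWithinAt (fun u => Matrix.trace ((E u)ᵀ * E u))
      (Matrix.trace (((-2:ℝ) • (E t * Y t) * (Y t)ᵀ + X t * ((-2:ℝ) • ((E t)ᵀ * X t))ᵀ)ᵀ * E t
        + (E t)ᵀ * ((-2:ℝ) • (E t * Y t) * (Y t)ᵀ + X t * ((-2:ℝ) • ((E t)ᵀ * X t))ᵀ)))
      (Set.Ico (0 : ℝ) T) t :=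
    fun t ht => ((hEd t ht).mtrans.matmul (hEd t ht)).mtrace
  have hnhds : ∀ u ∈ Set.Ioo (0 : ℝ) T, Set.Ico (0 : ℝ) T ∈ nhds u := fun u hu =>
    mem_nhds_iff.mpr ⟨Set.Ioo 0 T, Set.Ioo_subset_Ico_self, isOpen_Ioo, hu⟩
  have hganti : AntitoneOn (fun u => Matrix.trace ((E u)ᵀ * E u)) (Set.Ico (0 : ℝ) T) := by
    apply antitoneOn_of_deriv_nonpos (convex_Ico (0:ℝ) T)
    · exact fun u hu => (hgd u hu).continuousWithinAt
    · intro u hu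
      rw [interior_Ico] at hu
      exact ((hgd u (Set.Ioo_subset_Ico_self hu)).hasDerivAt
        (hnhds u hu)).differentiableAt.differentiableWithinAt
    · intro u hu
      rw [interior_Ico] at hu
      have hd := (hgd u (Set.Ioo_subset_Ico_self hu)).hasDerivAt (hnhds u hu)
      rw [hd.deriv, trace_aux]
      nlinarith [sq_nonneg ‖E u * Y u‖, sq_nonneg ‖(X u)ᵀ * E u‖]
  have hEmono : ∀ t ∈ Set.Ico (0 : ℝ) T, ‖E t‖ ≤ ‖E 0‖ := by
    intro t ht
    have h := hganti h0s ht ht.1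
    simp only at h
    rw [trace_transpose_mul_self, trace_transpose_mul_self] at h
    calc ‖E t‖ = Real.sqrt (‖E t‖ ^ 2) := (Real.sqrt_sq (norm_nonneg _)).symm
      _ ≤ Real.sqrt (‖E 0‖ ^ 2) := Real.sqrt_le_sqrt h
      _ = ‖E 0‖ := Real.sqrt_sq (norm_nonneg _)
  -- key Frobenius bound
  have hkey : ∀ t ∈ Set.Ico (0 : ℝ) T, ‖(X t)ᵀ * X t‖ ^ 2 + ‖(Y t)ᵀ * Y t‖ ^ 2 ≤
      ‖(X 0)ᵀ * X 0 - (Y 0)ᵀ * Y 0‖ ^ 2 + 2 * (‖X 0 * (Y 0)ᵀ - M‖ + ‖M‖) ^ 2 := by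
    intro t ht
    rw [norm_sq_identity, hDconst t ht]
    have h1 : ‖X t * (Y t)ᵀ‖ ≤ ‖X 0 * (Y 0)ᵀ - M‖ + ‖M‖ := by
      calc ‖X t * (Y t)ᵀ‖ = ‖E t + M‖ := by rw [hE]; simp
        _ ≤ ‖E t‖ + ‖M‖ := norm_add_le _ _
        _ ≤ ‖E 0‖ + ‖M‖ := by linarith [hEmono t ht]
        _ = ‖X 0 * (Y 0)ᵀ - M‖ + ‖M‖ := by rw [hE]
    have h2 : ‖X t * (Y t)ᵀ‖ ^ 2 ≤ (‖X 0 * (Y 0)ᵀ - M‖ + ‖M‖) ^ 2 :=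
      pow_le_pow_left₀ (norm_nonneg _) h1 2
    linarith
  constructor
  · intro t ht
    have hx4 : specNorm (X t) ^ 4 ≤ ‖(X t)ᵀ * X t‖ ^ 2 := by
      have h : specNorm (X t) ^ 4 = specNorm ((X t)ᵀ * X t) ^ 2 := by
        rw [specNorm_transpose_mul_self]; ring
      rw [h]
      exact pow_le_pow_left₀ (specNorm_nonneg _) (specNorm_le_frob _) 2
    have hy4 : specNorm (Y t) ^ 4 ≤ ‖(Y t)ᵀ * Y t‖ ^ 2 := by
      have h : specNorm (Y t) ^ 4 = specNorm ((Y t)ᵀ * Y t) ^ 2 := by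
        rw [specNorm_transpose_mul_self]; ring
      rw [h]
      exact pow_le_pow_left₀ (specNorm_nonneg _) (specNorm_le_frob _) 2
    linarith [hkey t ht]
  · refine ⟨Real.sqrt (Real.sqrt ((r : ℝ) *
      (‖(X 0)ᵀ * X 0 - (Y 0)ᵀ * Y 0‖ ^ 2 + 2 * (‖X 0 * (Y 0)ᵀ - M‖ + ‖M‖) ^ 2))),
      fun t ht => ⟨?_, ?_⟩⟩
    · have h4 : ‖X t‖ ^ 4 ≤ (r : ℝ) *
          (‖(X 0)ᵀ * X 0 - (Y 0)ᵀ * Y 0‖ ^ 2 + 2 * (‖X 0 * (Y 0)ᵀ - M‖ + ‖M‖) ^ 2) := by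
        refine (frob_pow4_le (X t)).trans (mul_le_mul_of_nonneg_left ?_ (by positivity))
        nlinarith [hkey t ht, sq_nonneg ‖(Y t)ᵀ * Y t‖]
      calc ‖X t‖ = Real.sqrt (Real.sqrt (‖X t‖ ^ 4)) := by
            rw [show (4:ℕ) = 2 * 2 from rfl, pow_mul, Real.sqrt_sq (sq_nonneg _),
              Real.sqrt_sq (norm_nonneg _)]
        _ ≤ _ := Real.sqrt_le_sqrt (Real.sqrt_le_sqrt h4)
    · have h4 : ‖Y t‖ ^ 4 ≤ (r : ℝ) *
          (‖(X 0)ᵀ * X 0 - (Y 0)ᵀ * Y 0‖ ^ 2 + 2 * (‖X 0 * (Y 0)ᵀ - M‖ + ‖M‖) ^ 2) := by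
        refine (frob_pow4_le (Y t)).trans (mul_le_mul_of_nonneg_left ?_ (by positivity))
        nlinarith [hkey t ht, sq_nonneg ‖(X t)ᵀ * X t‖]
      calc ‖Y t‖ = Real.sqrt (Real.sqrt (‖Y t‖ ^ 4)) := by
            rw [show (4:ℕ) = 2 * 2 from rfl, pow_mul, Real.sqrt_sq (sq_nonneg _),
              Real.sqrt_sq (norm_nonneg _)]
        _ ≤ _ := Real.sqrt_le_sqrt (Real.sqrt_le_sqrt h4)
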